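/- Fix positive integers m0, m, a real t0, and constants a < 0, b < 0, α < 0. Let μ_{j1,0} ∈ ℝ^k and symmetric positive definite Σ_{j1,0} for j1 ∈ {1,…,m0}, and μ_{j2,f} ∈ ℝ^k and symmetric positive definite Σ_{j2,f} for j2 ∈ {1,…,m}; let λ0 ∈ Δ^{m0−1} and λf ∈ Δ^{m−1}. For each j2 and any chosen index j1, define μ_{j2}(t) = μ_{j2,f} + (μ_{j1,0} − μ_{j2,f})·exp(a(t−t0)) and Σ_{j2}(t) = Σ_{j1,0}^{−1/2}·[exp(b(t−t0))·Σ_{j1,0} + (1 − exp(b(t−t0)))·(Σ_{j1,0}^{1/2}·Σ_{j2,f}·Σ_{j1,0}^{1/2})^{1/2}]²·Σ_{j1,0}^{−1/2}, and define the mixing proportions λ_{j1,0}(t) = λ0_{j1}·exp(α(t−t0)), λ_{j2}(t) = λf_{j2}·(1 − Σ_{j1} λ0_{j1}·exp(α(t−t0))). Define φ(x,t) = Σ_{j1=1}^{m0} λ_{j1,0}(t)·ρ(x; μ_{j1,0}, Σ_{j1,0}) + Σ_{j2=1}^{m} λ_{j2}(t)·ρ(x; μ_{j2}(t), Σ_{j2}(t)),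 and define the terminal density φ_f(x) = Σ_{j2=1}^{m} λf_{j2}·ρ(x; μ_{j2,f}, Σ_{j2,f}). Then for every fixed x ∈ ℝ^k, φ(x,t) → φ_f(x) as t → ∞. -/

import Mathlib

open Real Filter Topology
open scoped Classical

open scoped MatrixOrder Matrix.Norms.L2Operator in
/-- The (unique) positive semidefinite square root of a positive semidefinite
real matrix (junk value `0` if the matrix is not positive semidefinite). -/
noncomputable def psdSqrt {k : ℕ} (M : Matrix (Fin k) (Fin k) ℝ) :
    Matrix (Fin k) (Fin k) ℝ :=
  if M.PosSemidef then CFC.sqrt M else 0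

/-- The multivariate Gaussian probability density
`ρ(x; μ, Σ) = exp(−(1/2)(x−μ)ᵀ Σ⁻¹ (x−μ)) / √(det Σ · (2π)^k)`. -/
noncomputable def gaussPDF {k : ℕ} (μ : Fin k → ℝ) (S : Matrix (Fin k) (Fin k) ℝ)
    (x : Fin k → ℝ) : ℝ :=
  Real.exp (-(1 / 2 : ℝ) * (dotProduct (x - μ) (S⁻¹.mulVec (x - μ)))) /
    Real.sqrt (S.det * (2 * Real.pi) ^ k)

private lemma tendsto_exp_neg_mul (c t0 : ℝ) (hc : c < 0) :
    Tendsto (fun t => Real.exp (c * (t - t0))) atTop (𝓝 0) := by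
  apply Real.tendsto_exp_atBot.comp
  have h1 : Tendsto (fun t : ℝ => t - t0) atTop atTop :=
    tendsto_atTop_add_const_right atTop (-t0) tendsto_id
  exact h1.const_mul_atTop_of_neg hc

set_option maxHeartbeats 1000000 in
private lemma tendsto_gaussPDF {k : ℕ} (x : Fin k → ℝ) {μ : Fin k → ℝ}
    {S : Matrix (Fin k) (Fin k) ℝ} (hS : S.PosDef)
    {f : ℝ → Fin k → ℝ} {g : ℝ → Matrix (Fin k) (Fin k) ℝ}
    (hf : Tendsto f atTop (𝓝 μ)) (hg : Tendsto g atTop (𝓝 S)) :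
    Tendsto (fun t => gaussPDF (f t) (g t) x) atTop (𝓝 (gaussPDF μ S x)) := by
  have hdet : (0 : ℝ) < S.det := hS.det_pos
  have hden : Real.sqrt (S.det * (2 * Real.pi) ^ k) ≠ 0 := by
    refine (Real.sqrt_pos.mpr ?_).ne'
    positivity
  have hC : ContinuousAt (fun p : (Fin k → ℝ) × Matrix (Fin k) (Fin k) ℝ =>
      gaussPDF p.1 p.2 x) (μ, S) := by
    unfold gaussPDF
    have hinv : ContinuousAt
        (fun p : (Fin k → ℝ) × Matrix (Fin k) (Fin k) ℝ => p.2⁻¹) (μ, S) := by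
      have h := continuousAt_matrix_inv (R := ℝ) S (by
        rw [Ring.inverse_eq_inv']
        exact continuousAt_inv₀ hdet.ne')
      exact h.comp continuousAt_snd
    have hsub : ContinuousAt
        (fun p : (Fin k → ℝ) × Matrix (Fin k) (Fin k) ℝ => x - p.1) (μ, S) :=
      (continuous_const.sub continuous_fst).continuousAt
    have hd : Continuous fun q : (Fin k → ℝ) × (Fin k → ℝ) =>
        dotProduct q.1 q.2 := continuous_fst.dotProduct continuous_snd
    have hmv : Continuous fun q : Matrix (Fin k) (Fin k) ℝ × (Fin k → ℝ) =>
        q.1.mulVec q.2 := continuous_fst.matrix_mulVec continuous_snd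
    have hquad : ContinuousAt (fun p : (Fin k → ℝ) × Matrix (Fin k) (Fin k) ℝ =>
        dotProduct (x - p.1) (p.2⁻¹.mulVec (x - p.1))) (μ, S) :=
      hd.continuousAt.comp (hsub.prodMk (hmv.continuousAt.comp (hinv.prodMk hsub)))
    have hnum : ContinuousAt (fun p : (Fin k → ℝ) × Matrix (Fin k) (Fin k) ℝ =>
        Real.exp (-(1 / 2 : ℝ) *
          dotProduct (x - p.1) (p.2⁻¹.mulVec (x - p.1)))) (μ, S) :=
      Real.continuous_exp.continuousAt.comp (continuousAt_const.mul hquad)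
    have hdenc : ContinuousAt (fun p : (Fin k → ℝ) × Matrix (Fin k) (Fin k) ℝ =>
        Real.sqrt (p.2.det * (2 * Real.pi) ^ k)) (μ, S) :=
      (Real.continuous_sqrt.comp
        (continuous_snd.matrix_det.mul continuous_const)).continuousAt
    exact hnum.div hdenc hden
  have h := hC.tendsto.comp (hf.prodMk_nhds hg)
  exact h.congr fun t => rfl

/-- Pointwise convergence of the time-varying Gaussian mixture
`φ(x,t)` of Proposition 1 to the terminal mixture `φ_f(x)` as `t → ∞`. -/
theorem gaussian_mixture_pointwise_limit
    (k m0 m : ℕ) (hm0 : 0 < m0) (hm : 0 < m) (t0 a b α : ℝ)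
    (ha : a < 0) (hb : b < 0) (hα : α < 0)
    (μ0 : Fin m0 → Fin k → ℝ) (S0 : Fin m0 → Matrix (Fin k) (Fin k) ℝ)
    (hS0 : ∀ j1, (S0 j1).PosDef)
    (μf : Fin m → Fin k → ℝ) (Sf : Fin m → Matrix (Fin k) (Fin k) ℝ)
    (hSf : ∀ j2, (Sf j2).PosDef)
    (lam0 : Fin m0 → ℝ) (hlam0 : ∀ j1, 0 ≤ lam0 j1) (hlam0sum : ∑ j1, lam0 j1 = 1)
    (lamf : Fin m → ℝ) (hlamf : ∀ j2, 0 ≤ lamf j2) (hlamfsum : ∑ j2, lamf j2 = 1)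
    -- a chosen index `j1` for each `j2`
    (c : Fin m → Fin m0)
    (μt : Fin m → ℝ → Fin k → ℝ)
    (hμt : ∀ j2 t, μt j2 t = μf j2 + Real.exp (a * (t - t0)) • (μ0 (c j2) - μf j2))
    (St : Fin m → ℝ → Matrix (Fin k) (Fin k) ℝ)
    (hSt : ∀ j2 t, St j2 t = (psdSqrt (S0 (c j2)))⁻¹ *
      (Real.exp (b * (t - t0)) • S0 (c j2) +
        (1 - Real.exp (b * (t - t0))) •
          psdSqrt (psdSqrt (S0 (c j2)) * Sf j2 * psdSqrt (S0 (c j2)))) ^ 2 *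
      (psdSqrt (S0 (c j2)))⁻¹)
    (lam10 : ℝ → Fin m0 → ℝ) (lam2 : ℝ → Fin m → ℝ)
    (hlam10 : ∀ t j1, lam10 t j1 = lam0 j1 * Real.exp (α * (t - t0)))
    (hlam2 : ∀ t j2, lam2 t j2
      = lamf j2 * (1 - ∑ j1, lam0 j1 * Real.exp (α * (t - t0))))
    (φ : (Fin k → ℝ) → ℝ → ℝ)
    (hφ : ∀ x t, φ x t = (∑ j1, lam10 t j1 * gaussPDF (μ0 j1) (S0 j1) x)
      + ∑ j2, lam2 t j2 * gaussPDF (μt j2 t) (St j2 t) x)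
    (φf : (Fin k → ℝ) → ℝ)
    (hφf : ∀ x, φf x = ∑ j2, lamf j2 * gaussPDF (μf j2) (Sf j2) x) :
    ∀ x : Fin k → ℝ, Tendsto (fun t => φ x t) atTop (𝓝 (φf x)) := by
  intro x
  have heα := tendsto_exp_neg_mul α t0 hα
  -- first sum tends to 0
  have h1 : Tendsto (fun t => ∑ j1, lam10 t j1 * gaussPDF (μ0 j1) (S0 j1) x)
      atTop (𝓝 0) := by
    have : Tendsto (fun t => ∑ j1, lam10 t j1 * gaussPDF (μ0 j1) (S0 j1) x)
        atTop (𝓝 (∑ _j1 : Fin m0, (0 : ℝ))) := by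
      refine tendsto_finset_sum _ fun j1 _ => ?_
      have h := (heα.const_mul (lam0 j1)).mul
        (tendsto_const_nhds (x := gaussPDF (μ0 j1) (S0 j1) x))
      simp only [mul_zero, zero_mul] at h
      refine h.congr fun t => ?_
      rw [hlam10]
    simpa using this
  -- the inner sum tends to 0, so (1 - inner) → 1
  have hinner : Tendsto (fun t => 1 - ∑ j1, lam0 j1 * Real.exp (α * (t - t0)))
      atTop (𝓝 1) := by
    have hsum : Tendsto (fun t => ∑ j1, lam0 j1 * Real.exp (α * (t - t0)))
        atTop (𝓝 (∑ _j1 : Fin m0, (0 : ℝ))) := by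
      refine tendsto_finset_sum _ fun j1 _ => ?_
      simpa using heα.const_mul (lam0 j1)
    simp only [Finset.sum_const, smul_zero] at hsum
    simpa using tendsto_const_nhds.sub hsum
  -- second sum tends to φf x
  have h2 : Tendsto (fun t => ∑ j2, lam2 t j2 * gaussPDF (μt j2 t) (St j2 t) x)
      atTop (𝓝 (∑ j2, lamf j2 * gaussPDF (μf j2) (Sf j2) x)) := by
    refine tendsto_finset_sum _ fun j2 _ => ?_
    -- mean tends to μf j2
    have hf : Tendsto (fun t => μt j2 t) atTop (𝓝 (μf j2)) := by
      have h := (tendsto_const_nhds (x := μf j2)).add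
        ((tendsto_exp_neg_mul a t0 ha).smul
          (tendsto_const_nhds (x := μ0 (c j2) - μf j2)))
      simp only [zero_smul, add_zero] at h
      exact h.congr fun t => (hμt j2 t).symm
    -- covariance tends to Sf j2
    have hg : Tendsto (fun t => St j2 t) atTop (𝓝 (Sf j2)) := by
      set Q := psdSqrt (S0 (c j2)) with hQdef
      have hQps : (S0 (c j2)).PosSemidef := (hS0 (c j2)).posSemidef
      open scoped MatrixOrder Matrix.Norms.L2Operator in
      have hQ : Q = CFC.sqrt (S0 (c j2)) := by rw [hQdef, psdSqrt, if_pos hQps]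
      open scoped MatrixOrder Matrix.Norms.L2Operator in
      have hQP : Q.PosSemidef := hQ ▸ Matrix.nonneg_iff_posSemidef.mp (CFC.sqrt_nonneg _)
      open scoped MatrixOrder Matrix.Norms.L2Operator in
      have hQQ : Q * Q = S0 (c j2) := hQ ▸ CFC.sqrt_mul_sqrt_self _ hQps.nonneg
      have hQdetne : Q.det ≠ 0 := by
        intro h0
        have : (S0 (c j2)).det = 0 := by
          rw [← hQQ, Matrix.det_mul, h0, zero_mul]
        exact (hS0 (c j2)).det_pos.ne' this
      have hQunit : IsUnit Q.det := isUnit_iff_ne_zero.mpr hQdetne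
      have hQH : Q.conjTranspose = Q := hQP.1
      have hBps : (Q * Sf j2 * Q).PosSemidef := by
        have h := (hSf j2).posSemidef.mul_mul_conjTranspose_same Q
        rwa [hQH] at h
      set B := psdSqrt (Q * Sf j2 * Q) with hBdef
      have hB2 : B * B = Q * Sf j2 * Q := by
        open scoped MatrixOrder Matrix.Norms.L2Operator in
        (rw [hBdef, psdSqrt, if_pos hBps]; exact CFC.sqrt_mul_sqrt_self _ hBps.nonneg)
      have e1 : Q⁻¹ * Q = 1 := Matrix.nonsing_inv_mul Q hQunit
      have e2 : Q * Q⁻¹ = 1 := Matrix.mul_nonsing_inv Q hQunit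
      have key : Q⁻¹ * (Q * Sf j2 * Q) * Q⁻¹ = Sf j2 := by
        simp only [mul_assoc]
        rw [e2, mul_one, ← mul_assoc, e1, one_mul]
      have hFc : Continuous (fun e : ℝ =>
          Q⁻¹ * (e • S0 (c j2) + (1 - e) • B) ^ 2 * Q⁻¹) := by
        simp only [sq]
        have hin : Continuous (fun e : ℝ => e • S0 (c j2) + (1 - e) • B) :=
          (continuous_id.smul continuous_const).add
            ((continuous_const.sub continuous_id).smul continuous_const)
        exact (continuous_const.matrix_mul (hin.matrix_mul hin)).matrix_mul
          continuous_const
      have he := tendsto_exp_neg_mul b t0 hb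
      have h := (hFc.continuousAt (x := (0 : ℝ))).tendsto.comp he
      have hF0 : Q⁻¹ * ((0 : ℝ) • S0 (c j2) + (1 - (0 : ℝ)) • B) ^ 2 * Q⁻¹
          = Sf j2 := by
        rw [zero_smul, zero_add, sub_zero, one_smul, sq, hB2, key]
      rw [hF0] at h
      exact h.congr fun t => (hSt j2 t).symm
    have hG := tendsto_gaussPDF x (hSf j2) hf hg
    have h := (hinner.const_mul (lamf j2)).mul hG
    simp only [mul_one] at h
    refine h.congr fun t => ?_
    rw [hlam2, mul_assoc]
  have h := h1.add h2
  rw [zero_add] at h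
  rw [hφf]
  exact h.congr fun t => (hφ x t).symm
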